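/- arXiv:2302.02222 — 5 statements merged into one kernel-verified Lean document; each statement's English description precedes it below -/
import Mathlib

section
/- Let p be a prime and S a finite p-group. If A, B ∈ 𝕎(S), then ⁅a,b⁆ = 1 for all a ∈ A and b ∈ B. Consequently W(S) is an elementary abelian normal subgroup of S. -/
/-! If `A, B ∈ 𝕎(S)` and `b ∈ B`, then every `⁅a, b⁆` with `a ∈ A` lies in the normal subgroup
`B`, which is abelian, so `⁅⁅a, b⁆, b⁆ = 1` for all `a ∈ A`; the defining property of `A` then
gives `⁅a, b⁆ = 1`. Hence the members of `𝕎(S)` centralize each other, so their join `W(S)` is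
abelian, is normal as a join of normal subgroups, and has exponent `p` since it is generated by
commuting elements of order dividing `p`. -/

open scoped commutatorElement

/-- The set `𝕎(S)` of elementary abelian normal subgroups `A` of `S` such that for every
`s ∈ S`, if `⁅⁅a,s⁆,s⁆ = 1` for all `a ∈ A` then `⁅a,s⁆ = 1` for all `a ∈ A`. -/
def WSet (p : ℕ) (S : Type*) [Group S] : Set (Subgroup S) :=
  {A | A.Normal ∧ (∀ a ∈ A, ∀ b ∈ A, a * b = b * a) ∧ (∀ a ∈ A, a ^ p = 1) ∧
    ∀ s : S, (∀ a ∈ A, ⁅⁅a, s⁆, s⁆ = 1) → ∀ a ∈ A, ⁅a, s⁆ = 1}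

/-- `W(S)`, the subgroup of `S` generated by all members of `𝕎(S)`. -/
def Wsub (p : ℕ) (S : Type*) [Group S] : Subgroup S :=
  sSup (WSet p S)

namespace Subgroup

variable {G : Type*} [Group G]

theorem sSup_le_centralizer_sSup {𝒮 : Set (Subgroup G)}
    (h : ∀ H ∈ 𝒮, ∀ K ∈ 𝒮, H ≤ centralizer K) : sSup 𝒮 ≤ centralizer (sSup 𝒮 : Subgroup G) :=
  sSup_le fun H hH => le_centralizer_iff.mpr <| sSup_le fun K hK => h K hK H hH

theorem pow_eq_one_of_mem_sSup {𝒮 : Set (Subgroup G)} {n : ℕ}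
    (hcomm : sSup 𝒮 ≤ centralizer (sSup 𝒮 : Subgroup G))
    (hpow : ∀ H ∈ 𝒮, ∀ x ∈ H, x ^ n = 1) {x : G} (hx : x ∈ sSup 𝒮) : x ^ n = 1 := by
  rw [sSup_eq_iSup'] at hx hcomm
  induction hx using iSup_induction' with
  | hp H x hx => exact hpow H H.2 x hx
  | h1 => exact one_pow n
  | hmul x y hx hy ihx ihy =>
    have hxy : Commute x y := mem_centralizer_iff.mp (hcomm hy) x hx
    rw [hxy.mul_pow, ihx, ihy, one_mul]

end Subgroup

theorem commutatorElement_mem_of_normal {G : Type*} [Group G] {B : Subgroup G} [B.Normal]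
    (a : G) {b : G} (hb : b ∈ B) : ⁅a, b⁆ ∈ B :=
  Subgroup.commutator_le_right ⊤ B (Subgroup.commutator_mem_commutator (Subgroup.mem_top a) hb)

theorem WSet.commutatorElement_eq_one {p : ℕ} {S : Type*} [Group S] {A B : Subgroup S}
    (hA : A ∈ WSet p S) (hB : B ∈ WSet p S) {a b : S} (ha : a ∈ A) (hb : b ∈ B) :
    ⁅a, b⁆ = 1 := by
  obtain ⟨-, -, -, hAW⟩ := hA
  obtain ⟨hBnormal, hBcomm, -, -⟩ := hB
  refine hAW b (fun a' _ => ?_) a ha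
  exact commutatorElement_eq_one_iff_mul_comm.mpr
    (hBcomm _ (commutatorElement_mem_of_normal a' hb) b hb)

theorem Wsub_elementaryAbelian_normal_general (p : ℕ) (S : Type*) [Group S] :
    (∀ A ∈ WSet p S, ∀ B ∈ WSet p S, ∀ a ∈ A, ∀ b ∈ B, ⁅a, b⁆ = 1) ∧
    (Wsub p S).Normal ∧
    (∀ a ∈ Wsub p S, ∀ b ∈ Wsub p S, a * b = b * a) ∧
    (∀ a ∈ Wsub p S, a ^ p = 1) := by
  have hcomm : Wsub p S ≤ Subgroup.centralizer (Wsub p S) :=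
    Subgroup.sSup_le_centralizer_sSup fun A hA B hB a ha =>
      Subgroup.mem_centralizer_iff.mpr fun b hb =>
        commutatorElement_eq_one_iff_mul_comm.mp (WSet.commutatorElement_eq_one hB hA hb ha)
  refine ⟨fun A hA B hB a ha b hb => WSet.commutatorElement_eq_one hA hB ha hb,
    Subgroup.sSup_normal _ fun A hA => hA.1,
    fun a ha b hb => Subgroup.mem_centralizer_iff.mp (hcomm hb) a ha,
    fun a ha => Subgroup.pow_eq_one_of_mem_sSup hcomm (fun A hA => hA.2.2.1) ha⟩

/-- For a prime `p` and a finite `p`-group `S`: any two members of `𝕎(S)` commute elementwise;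
consequently `W(S)` is an elementary abelian normal subgroup of `S`. -/
theorem Wsub_elementaryAbelian_normal (p : ℕ) (hp : p.Prime) (S : Type*) [Group S] [Finite S]
    (hS : IsPGroup p S) :
    (∀ A ∈ WSet p S, ∀ B ∈ WSet p S, ∀ a ∈ A, ∀ b ∈ B, ⁅a, b⁆ = 1) ∧
    (Wsub p S).Normal ∧
    (∀ a ∈ Wsub p S, ∀ b ∈ Wsub p S, a * b = b * a) ∧
    (∀ a ∈ Wsub p S, a ^ p = 1) :=
  Wsub_elementaryAbelian_normal_general p S
end

section
/- Let p be a prime and S a finite p-group. If T is a subgroup of S with W(S) ≤ T ≤ S, then W(S) ≤ W(T). -/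
open scoped commutatorElement

theorem subgroupOf_mem_WSet {p : ℕ} {S : Type*} [Group S] {A T : Subgroup S}
    (hA : A ∈ WSet p S) (hAT : A ≤ T) : A.subgroupOf T ∈ WSet p T := by
  obtain ⟨hnormal, hcomm, hexp, hquad⟩ := hA
  have coe_comm (a s : T) : ((⁅a, s⁆ : T) : S) = ⁅(a : S), (s : S)⁆ :=
    map_commutatorElement T.subtype a s
  refine ⟨hnormal.subgroupOf T, fun a ha b hb ↦ Subtype.ext (hcomm a ha b hb),
    fun a ha ↦ Subtype.ext (by simpa using hexp a ha), fun s hs a ha ↦ Subtype.ext ?_⟩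
  have hs' : ∀ x ∈ A, ⁅⁅x, (s : S)⁆, (s : S)⁆ = 1 := fun x hx ↦ by
    simpa [coe_comm] using congrArg Subtype.val (hs ⟨x, hAT hx⟩ hx)
  simpa [coe_comm] using hquad s hs' a ha

theorem Wsub_le_Wsub_of_le_general (p : ℕ) (S : Type*) [Group S]
    (T : Subgroup S) (hT : Wsub p S ≤ T) :
    Wsub p S ≤ Subgroup.map T.subtype (Wsub p T) := by
  refine sSup_le fun A hA ↦ ?_
  have hAT : A ≤ T := (le_sSup hA).trans hT
  calc A = (A.subgroupOf T).map T.subtype := (Subgroup.map_subgroupOf_eq_of_le hAT).symm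
    _ ≤ (Wsub p T).map T.subtype := Subgroup.map_mono (le_sSup (subgroupOf_mem_WSet hA hAT))

/-- For a prime `p`, a finite `p`-group `S` and a subgroup `T` with `W(S) ≤ T ≤ S`, one has
`W(S) ≤ W(T)` (where `W(T)` is viewed inside `S` via the inclusion of `T`). -/
theorem Wsub_le_Wsub_of_le (p : ℕ) (hp : p.Prime) (S : Type*) [Group S] [Finite S]
    (hS : IsPGroup p S) (T : Subgroup S) (hT : Wsub p S ≤ T) :
    Wsub p S ≤ Subgroup.map T.subtype (Wsub p T) :=
  Wsub_le_Wsub_of_le_general p S T hT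
end

section
/- Let S be a finite 2-group and suppose A, B ∈ 𝒜(S) satisfy AB = S (every element of S is a product ab with a ∈ A, b ∈ B). If C_B(a) = A ∩ B for every a ∈ A \ (A ∩ B), then 𝒜(S) = {A, B}, and every element x ∈ S with x² = 1 lies in A ∪ B. -/
/-- A subgroup `A` of a group is elementary abelian (for the prime `p`) if it is abelian and
every element satisfies `a ^ p = 1`. -/
def IsElementaryAbelian (p : ℕ) {G : Type*} [Group G] (A : Subgroup G) : Prop :=
  (∀ a ∈ A, ∀ b ∈ A, a * b = b * a) ∧ ∀ a ∈ A, a ^ p = 1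

/-- `𝒜(S)`: the set of elementary abelian subgroups of `S` of maximal order. -/
def maxElemAb (p : ℕ) (S : Type*) [Group S] : Set (Subgroup S) :=
  {A | IsElementaryAbelian p A ∧
    ∀ B : Subgroup S, IsElementaryAbelian p B → Nat.card B ≤ Nat.card A}

/-- Let `S` be a finite `2`-group with `A, B ∈ 𝒜(S)` such that `A * B = S`. If
`C_B(a) = A ∩ B` for every `a ∈ A \ (A ∩ B)`, then `𝒜(S) = {A, B}` and every element of `S`
of order dividing `2` lies in `A ∪ B`. -/
theorem maxElemAb_eq_pair (S : Type*) [Group S] [Finite S] (hS : IsPGroup 2 S)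
    (A B : Subgroup S) (hA : A ∈ maxElemAb 2 S) (hB : B ∈ maxElemAb 2 S)
    (hAB : ∀ s : S, ∃ a ∈ A, ∃ b ∈ B, s = a * b)
    (hcent : ∀ a ∈ A, a ∉ B → ∀ b ∈ B, (a * b = b * a ↔ b ∈ A)) :
    maxElemAb 2 S = {A, B} ∧ ∀ x : S, x ^ 2 = 1 → x ∈ A ∨ x ∈ B := by
  have part2 : ∀ x : S, x ^ 2 = 1 → x ∈ A ∨ x ∈ B := by
    intro x hx
    obtain ⟨a, ha, b, hb, rfl⟩ := hAB x
    have ha2 : a * a = 1 := by have := hA.1.2 a ha; rwa [pow_two] at this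
    have hb2 : b * b = 1 := by have := hB.1.2 b hb; rwa [pow_two] at this
    rw [pow_two] at hx
    have hainv : a⁻¹ = a := inv_eq_of_mul_eq_one_right ha2
    have hbinv : b⁻¹ = b := inv_eq_of_mul_eq_one_right hb2
    have hcomm : a * b = b * a := by
      have h1 : (a * b)⁻¹ = a * b := inv_eq_of_mul_eq_one_right hx
      rw [mul_inv_rev, hainv, hbinv] at h1
      exact h1.symm
    by_cases haB : a ∈ B
    · right; exact B.mul_mem haB hb
    · left; exact A.mul_mem ha ((hcent a ha haB b hb).mp hcomm)
  refine ⟨?_, part2⟩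
  ext C
  constructor
  · intro hC
    have hcard : Nat.card A ≤ Nat.card C := hC.2 A hA.1
    have hcardB : Nat.card B ≤ Nat.card C := hC.2 B hB.1
    have hsub : ∀ c ∈ C, c ∈ A ∨ c ∈ B := fun c hc => part2 c (hC.1.2 c hc)
    by_cases hCA : C ≤ A
    · left
      exact Subgroup.eq_of_le_of_card_ge hCA hcard
    · right
      have hCB : C ≤ B := by
        obtain ⟨c, hcC, hcA⟩ := SetLike.not_le_iff_exists.mp hCA
        have hcB : c ∈ B := (hsub c hcC).resolve_left hcA
        intro d hd
        by_contra hdB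
        have hdA : d ∈ A := (hsub d hd).resolve_right hdB
        rcases hsub (c * d) (C.mul_mem hcC hd) with h | h
        · exact hcA (by simpa using A.mul_mem h (A.inv_mem hdA))
        · exact hdB (by simpa using B.mul_mem (B.inv_mem hcB) h)
      exact Subgroup.eq_of_le_of_card_ge hCB hcardB
  · rintro (rfl | rfl)
    · exact hA
    · exact hB
end

section
/- Let p be a prime, n ≥ 1, q = p^n, G = SL₂(GF(q)), V = GF(q)² the natural module, and S a Sylow p-subgroup of G. Then for every nonidentity element s ∈ S and every v ∈ V \ C_V(S), the following subsets of V coincide: C_V(s) = C_V(S) = [V,S] = [V,s] = {g·v − v : g ∈ S}. -/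
/-!
A Sylow `p`-subgroup `S` of `SL₂(K)`, `K` finite of characteristic `p`, fixes a nonzero vector `w`:
the number of fixed points of the `p`-group `S` on `V = K²` is `≡ |V| ≡ 0 (mod p)`, and `0` is
one of them. The stabilizer of `w` is itself a `p`-group, since each of its elements `t` satisfies
`det (t - 1) = 0 = tr (t - 1)`, hence `(t - 1)² = 0` and `t ^ p = 1`; so `S` is that stabilizer.
For `1 ≠ t ∈ S` the map `t - 1` is a nonzero square-zero endomorphism of the plane killing `w`,
so its kernel and its image are both the line `K w`. Finally, for `v ∉ K w` the transvections
fixing `w` move `v` to every point of `v + K w`.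
-/

open Module Submodule MulAction
open scoped MatrixGroups

namespace Matrix

variable {R : Type*} [CommRing R]

theorem mul_self_eq_trace_smul_sub_det_smul (N : Matrix (Fin 2) (Fin 2) R) :
    N * N = N.trace • N - N.det • 1 := by
  ext i j
  fin_cases i <;> fin_cases j <;> simp [mul_apply, trace_fin_two, det_fin_two] <;> ring

theorem mul_self_eq_zero_of_trace_eq_zero_of_det_eq_zero {N : Matrix (Fin 2) (Fin 2) R}
    (htr : N.trace = 0) (hdet : N.det = 0) : N * N = 0 := by
  rw [mul_self_eq_trace_smul_sub_det_smul, htr, hdet, zero_smul, zero_smul, sub_zero]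

theorem sub_one_mul_self_eq_zero_of_det_sub_one_eq_zero {M : Matrix (Fin 2) (Fin 2) R}
    (hM : M.det = 1) (h : (M - 1).det = 0) : (M - 1) * (M - 1) = 0 := by
  refine mul_self_eq_zero_of_trace_eq_zero_of_det_eq_zero ?_ h
  rw [det_fin_two] at hM h
  rw [trace_fin_two]
  simp only [sub_apply, one_fin_two, of_apply, cons_val', cons_val_zero, cons_val_one,
    empty_val', cons_val_fin_one] at h ⊢
  linear_combination hM - h

end Matrix

namespace LinearMap

variable {K V : Type*} [Field K] [AddCommGroup V] [Module K V] {f : V →ₗ[K] V}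

theorem finrank_ker_le_one_of_finrank_eq_two (hV : finrank K V = 2) (hf : f ≠ 0) :
    finrank K (ker f) ≤ 1 := by
  have : FiniteDimensional K V := Module.finite_of_finrank_eq_succ hV
  have := Submodule.finrank_lt (ker_eq_top.not.mpr hf)
  omega

theorem ker_eq_span_singleton_of_finrank_eq_two (hV : finrank K V = 2) (hf : f ≠ 0) {w : V}
    (hw : w ≠ 0) (hfw : f w = 0) : ker f = K ∙ w := by
  have : FiniteDimensional K V := Module.finite_of_finrank_eq_succ hV
  refine (eq_of_le_of_finrank_le ((span_singleton_le_iff_mem _ _).mpr hfw) ?_).symm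
  rw [finrank_span_singleton hw]
  exact finrank_ker_le_one_of_finrank_eq_two hV hf

theorem range_eq_ker_of_comp_self_eq_zero (hV : finrank K V = 2) (hf : f ≠ 0)
    (hff : f ∘ₗ f = 0) : range f = ker f := by
  have : FiniteDimensional K V := Module.finite_of_finrank_eq_succ hV
  refine eq_of_le_of_finrank_le (range_le_ker_iff.mpr hff) ?_
  have := finrank_ker_le_one_of_finrank_eq_two hV hf
  have := Nat.pos_of_ne_zero (finrank_eq_zero.not.mpr (range_eq_bot.not.mpr hf))
  omega

end LinearMap

namespace Matrix.SpecialLinearGroup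

section Transvection

variable {ι K : Type*} [Fintype ι] [DecidableEq ι] [Field K] {w : ι → K}

theorem exists_mem_stabilizer_mulVec_eq_add {v : ι → K} (hv : v ∉ K ∙ w) (c : K) :
    ∃ g ∈ stabilizer (SpecialLinearGroup ι K) w, (g : Matrix ι ι K) *ᵥ v = v + c • w := by
  obtain ⟨f, hfv, hf⟩ := Submodule.exists_le_ker_of_notMem hv
  have hfw : f w = 0 := hf (mem_span_singleton_self w)
  set T := LinearMap.transvection f ((c / f v) • w)
  have hT : (LinearMap.toMatrix' T).det = 1 := by
    rw [LinearMap.det_toMatrix', LinearMap.transvection.det, map_smul, hfw, smul_zero, add_zero]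
  refine ⟨⟨_, hT⟩, show LinearMap.toMatrix' T *ᵥ w = w from ?_, ?_⟩
  · rw [LinearMap.toMatrix'_mulVec, LinearMap.transvection.apply, hfw, zero_smul, add_zero]
  · rw [LinearMap.toMatrix'_mulVec, LinearMap.transvection.apply, smul_smul, mul_div_cancel₀ c hfv]

end Transvection

variable {K : Type*} [Field K] {w : Fin 2 → K} {t : SL(2, K)}

theorem sub_one_mul_self_eq_zero_of_mem_stabilizer (hw : w ≠ 0)
    (ht : t ∈ stabilizer SL(2, K) w) :
    ((t : Matrix (Fin 2) (Fin 2) K) - 1) * ((t : Matrix (Fin 2) (Fin 2) K) - 1) = 0 := by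
  refine sub_one_mul_self_eq_zero_of_det_sub_one_eq_zero t.2 ?_
  refine exists_mulVec_eq_zero_iff.mp ⟨w, hw, ?_⟩
  rw [sub_mulVec, one_mulVec, sub_eq_zero]
  exact ht

theorem mulVecLin_sub_one_ne_zero (ht1 : t ≠ 1) :
    ((t : Matrix (Fin 2) (Fin 2) K) - 1).mulVecLin ≠ 0 := by
  rw [← toLin'_apply', Ne, LinearEquiv.map_eq_zero_iff, sub_eq_zero]
  exact fun h ↦ ht1 (Subtype.ext h)

theorem ker_mulVecLin_sub_one_eq_span (hw : w ≠ 0) (ht : t ∈ stabilizer SL(2, K) w)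
    (ht1 : t ≠ 1) : LinearMap.ker ((t : Matrix (Fin 2) (Fin 2) K) - 1).mulVecLin = K ∙ w := by
  refine LinearMap.ker_eq_span_singleton_of_finrank_eq_two (finrank_fin_fun K)
    (mulVecLin_sub_one_ne_zero ht1) hw ?_
  rw [mulVecLin_apply, sub_mulVec, one_mulVec, sub_eq_zero]
  exact ht

theorem range_mulVecLin_sub_one_eq_span (hw : w ≠ 0) (ht : t ∈ stabilizer SL(2, K) w)
    (ht1 : t ≠ 1) : LinearMap.range ((t : Matrix (Fin 2) (Fin 2) K) - 1).mulVecLin = K ∙ w := by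
  have hsq : ((t : Matrix (Fin 2) (Fin 2) K) - 1).mulVecLin ∘ₗ
      ((t : Matrix (Fin 2) (Fin 2) K) - 1).mulVecLin = 0 := by
    rw [← mulVecLin_mul, sub_one_mul_self_eq_zero_of_mem_stabilizer hw ht, mulVecLin_zero]
  rw [LinearMap.range_eq_ker_of_comp_self_eq_zero (finrank_fin_fun K)
    (mulVecLin_sub_one_ne_zero ht1) hsq, ker_mulVecLin_sub_one_eq_span hw ht ht1]

theorem mulVec_sub_self_mem_span (hw : w ≠ 0) (ht : t ∈ stabilizer SL(2, K) w)
    (u : Fin 2 → K) : (t : Matrix (Fin 2) (Fin 2) K) *ᵥ u - u ∈ K ∙ w := by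
  obtain rfl | ht1 := eq_or_ne t 1
  · simp
  rw [← range_mulVecLin_sub_one_eq_span hw ht ht1]
  exact ⟨u, by rw [mulVecLin_apply, sub_mulVec, one_mulVec]⟩

theorem setOf_mulVec_eq_self_eq_span (hw : w ≠ 0) (ht : t ∈ stabilizer SL(2, K) w)
    (ht1 : t ≠ 1) :
    {u | (t : Matrix (Fin 2) (Fin 2) K) *ᵥ u = u} = (K ∙ w : Set (Fin 2 → K)) := by
  rw [← ker_mulVecLin_sub_one_eq_span hw ht ht1]
  ext u
  simp only [SetLike.mem_coe, LinearMap.mem_ker, mulVecLin_apply, sub_mulVec, one_mulVec,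
    sub_eq_zero, Set.mem_ofPred_eq]

variable {H : Subgroup SL(2, K)} {s : SL(2, K)}

theorem setOf_forall_mulVec_eq_self_eq_span (hw : w ≠ 0) (hH : H ≤ stabilizer SL(2, K) w)
    (hs : s ∈ H) (hs1 : s ≠ 1) :
    {u | ∀ t ∈ H, (t : Matrix (Fin 2) (Fin 2) K) *ᵥ u = u} = (K ∙ w : Set (Fin 2 → K)) := by
  ext u
  refine ⟨fun h ↦ setOf_mulVec_eq_self_eq_span hw (hH hs) hs1 ▸ h s hs, fun h t ht ↦ ?_⟩
  obtain ⟨c, rfl⟩ := mem_span_singleton.mp h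
  rw [mulVec_smul, show (t : Matrix (Fin 2) (Fin 2) K) *ᵥ w = w from hH ht]

theorem closure_mulVec_sub_self_eq_span (hw : w ≠ 0) (hH : H ≤ stabilizer SL(2, K) w)
    (hs : s ∈ H) (hs1 : s ≠ 1) :
    (AddSubgroup.closure {x | ∃ t ∈ H, ∃ u : Fin 2 → K,
        x = (t : Matrix (Fin 2) (Fin 2) K) *ᵥ u - u} : Set (Fin 2 → K))
      = (K ∙ w : Set (Fin 2 → K)) := by
  refine subset_antisymm ?_ fun x hx ↦ ?_
  · refine (AddSubgroup.closure_le (K ∙ w).toAddSubgroup).mpr ?_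
    rintro _ ⟨t, ht, u, rfl⟩
    exact mulVec_sub_self_mem_span hw (hH ht) u
  · rw [← range_mulVecLin_sub_one_eq_span hw (hH hs) hs1] at hx
    obtain ⟨u, rfl⟩ := hx
    exact AddSubgroup.subset_closure ⟨s, hs, u, by rw [mulVecLin_apply, sub_mulVec, one_mulVec]⟩

theorem setOf_exists_mulVec_sub_self_eq_span (hw : w ≠ 0) {v : Fin 2 → K} (hv : v ∉ K ∙ w) :
    {x | ∃ g ∈ stabilizer SL(2, K) w, x = (g : Matrix (Fin 2) (Fin 2) K) *ᵥ v - v}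
      = (K ∙ w : Set (Fin 2 → K)) := by
  ext x
  constructor
  · rintro ⟨g, hg, rfl⟩
    exact mulVec_sub_self_mem_span hw hg v
  · intro hx
    obtain ⟨c, rfl⟩ := mem_span_singleton.mp hx
    obtain ⟨g, hg, hgv⟩ := exists_mem_stabilizer_mulVec_eq_add hv c
    exact ⟨g, hg, by rw [hgv, add_sub_cancel_left]⟩

variable (p : ℕ) [Fact p.Prime] [CharP K p]

theorem pow_char_eq_one_of_mem_stabilizer (hw : w ≠ 0) (ht : t ∈ stabilizer SL(2, K) w) :
    t ^ p = 1 := by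
  have hN : ((t : Matrix (Fin 2) (Fin 2) K) - 1) ^ p = 0 :=
    pow_eq_zero_of_le (Fact.out : p.Prime).two_le
      (by rw [sq, sub_one_mul_self_eq_zero_of_mem_stabilizer hw ht])
  ext1
  rw [coe_pow, ← sub_add_cancel (t : Matrix (Fin 2) (Fin 2) K) 1,
    add_pow_char_of_commute p (Commute.one_right _), hN, one_pow, zero_add, coe_one]

theorem isPGroup_stabilizer (hw : w ≠ 0) : IsPGroup p (stabilizer SL(2, K) w) :=
  fun t ↦ ⟨1, Subtype.ext (by simpa using pow_char_eq_one_of_mem_stabilizer p hw t.2)⟩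

end Matrix.SpecialLinearGroup

open Matrix.SpecialLinearGroup

theorem Sylow.exists_eq_stabilizer_specialLinearGroup {K : Type*} [Field K] [Finite K]
    (p : ℕ) [Fact p.Prime] [CharP K p] (S : Sylow p SL(2, K)) :
    ∃ w : Fin 2 → K, w ≠ 0 ∧ (S : Subgroup SL(2, K)) = stabilizer SL(2, K) w := by
  have : Fintype K := Fintype.ofFinite K
  have hpK : p ∣ Nat.card K := by
    rw [Nat.card_eq_fintype_card]
    exact (CharP.cast_eq_zero_iff K p _).mp (Nat.cast_card_eq_zero K)
  have hpV : p ∣ Nat.card (Fin 2 → K) := by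
    rw [Nat.card_fun, Nat.card_fin]
    exact dvd_pow hpK two_ne_zero
  obtain ⟨w, hwS, hw⟩ := S.isPGroup'.exists_fixed_point_of_prime_dvd_card_of_fixed_point _ hpV
    (a := 0) fun t ↦ smul_zero t
  exact ⟨w, hw.symm, (S.is_maximal' (isPGroup_stabilizer p hw.symm)
    fun t ht ↦ hwS ⟨t, ht⟩).symm⟩

theorem sl2_natural_module_centralizers_general (p n : ℕ) [Fact p.Prime]
    (S : Sylow p (Matrix.SpecialLinearGroup (Fin 2) (GaloisField p n)))
    (s : Matrix.SpecialLinearGroup (Fin 2) (GaloisField p n))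
    (hs : s ∈ (S : Subgroup (Matrix.SpecialLinearGroup (Fin 2) (GaloisField p n))))
    (hs1 : s ≠ 1) (v : Fin 2 → GaloisField p n)
    (hv : ¬ ∀ t ∈ (S : Subgroup (Matrix.SpecialLinearGroup (Fin 2) (GaloisField p n))),
      Matrix.mulVec (t : Matrix (Fin 2) (Fin 2) (GaloisField p n)) v = v) :
    {w : Fin 2 → GaloisField p n |
        Matrix.mulVec (s : Matrix (Fin 2) (Fin 2) (GaloisField p n)) w = w}
      = {w : Fin 2 → GaloisField p n |
          ∀ t ∈ (S : Subgroup (Matrix.SpecialLinearGroup (Fin 2) (GaloisField p n))),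
            Matrix.mulVec (t : Matrix (Fin 2) (Fin 2) (GaloisField p n)) w = w} ∧
    {w : Fin 2 → GaloisField p n |
        ∀ t ∈ (S : Subgroup (Matrix.SpecialLinearGroup (Fin 2) (GaloisField p n))),
          Matrix.mulVec (t : Matrix (Fin 2) (Fin 2) (GaloisField p n)) w = w}
      = (AddSubgroup.closure {w : Fin 2 → GaloisField p n |
          ∃ t ∈ (S : Subgroup (Matrix.SpecialLinearGroup (Fin 2) (GaloisField p n))),
            ∃ u : Fin 2 → GaloisField p n,
              w = Matrix.mulVec (t : Matrix (Fin 2) (Fin 2) (GaloisField p n)) u - u} :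
          Set (Fin 2 → GaloisField p n)) ∧
    (AddSubgroup.closure {w : Fin 2 → GaloisField p n |
        ∃ t ∈ (S : Subgroup (Matrix.SpecialLinearGroup (Fin 2) (GaloisField p n))),
          ∃ u : Fin 2 → GaloisField p n,
            w = Matrix.mulVec (t : Matrix (Fin 2) (Fin 2) (GaloisField p n)) u - u} :
        Set (Fin 2 → GaloisField p n))
      = (AddSubgroup.closure {w : Fin 2 → GaloisField p n |
          ∃ t ∈ Subgroup.zpowers s, ∃ u : Fin 2 → GaloisField p n,
            w = Matrix.mulVec (t : Matrix (Fin 2) (Fin 2) (GaloisField p n)) u - u} :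
          Set (Fin 2 → GaloisField p n)) ∧
    (AddSubgroup.closure {w : Fin 2 → GaloisField p n |
        ∃ t ∈ Subgroup.zpowers s, ∃ u : Fin 2 → GaloisField p n,
          w = Matrix.mulVec (t : Matrix (Fin 2) (Fin 2) (GaloisField p n)) u - u} :
        Set (Fin 2 → GaloisField p n))
      = {w : Fin 2 → GaloisField p n |
          ∃ g ∈ (S : Subgroup (Matrix.SpecialLinearGroup (Fin 2) (GaloisField p n))),
            w = Matrix.mulVec (g : Matrix (Fin 2) (Fin 2) (GaloisField p n)) v - v} := by
  obtain ⟨w, hw, hS⟩ := S.exists_eq_stabilizer_specialLinearGroup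
  rw [hS] at hs hv ⊢
  have hC := setOf_forall_mulVec_eq_self_eq_span hw le_rfl hs hs1
  have hcS := closure_mulVec_sub_self_eq_span hw le_rfl hs hs1
  have hcs := closure_mulVec_sub_self_eq_span hw (Subgroup.zpowers_le.mpr hs)
    (Subgroup.mem_zpowers s) hs1
  have hv' : v ∉ GaloisField p n ∙ w := fun h ↦ hv ((Set.ext_iff.mp hC v).mpr h)
  exact ⟨(setOf_mulVec_eq_self_eq_span hw hs hs1).trans hC.symm, hC.trans hcS.symm,
    hcS.trans hcs.symm, hcs.trans (setOf_exists_mulVec_sub_self_eq_span hw hv').symm⟩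

/-- Let `p` be a prime, `q = p ^ n` with `n ≥ 1`, `G = SL₂(GF(q))` acting on its natural module
`V = GF(q)²`, and `S ∈ Syl_p(G)`. For every nonidentity `s ∈ S` and every `v ∈ V \ C_V(S)`,
the following subsets of `V` coincide:
`C_V(s) = C_V(S) = [V, S] = [V, s] = {g • v - v : g ∈ S}`. -/
theorem sl2_natural_module_centralizers (p n : ℕ) [Fact p.Prime] (hn : 1 ≤ n)
    (S : Sylow p (Matrix.SpecialLinearGroup (Fin 2) (GaloisField p n)))
    (s : Matrix.SpecialLinearGroup (Fin 2) (GaloisField p n))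
    (hs : s ∈ (S : Subgroup (Matrix.SpecialLinearGroup (Fin 2) (GaloisField p n))))
    (hs1 : s ≠ 1) (v : Fin 2 → GaloisField p n)
    (hv : ¬ ∀ t ∈ (S : Subgroup (Matrix.SpecialLinearGroup (Fin 2) (GaloisField p n))),
      Matrix.mulVec (t : Matrix (Fin 2) (Fin 2) (GaloisField p n)) v = v) :
    {w : Fin 2 → GaloisField p n |
        Matrix.mulVec (s : Matrix (Fin 2) (Fin 2) (GaloisField p n)) w = w}
      = {w : Fin 2 → GaloisField p n |
          ∀ t ∈ (S : Subgroup (Matrix.SpecialLinearGroup (Fin 2) (GaloisField p n))),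
            Matrix.mulVec (t : Matrix (Fin 2) (Fin 2) (GaloisField p n)) w = w} ∧
    {w : Fin 2 → GaloisField p n |
        ∀ t ∈ (S : Subgroup (Matrix.SpecialLinearGroup (Fin 2) (GaloisField p n))),
          Matrix.mulVec (t : Matrix (Fin 2) (Fin 2) (GaloisField p n)) w = w}
      = (AddSubgroup.closure {w : Fin 2 → GaloisField p n |
          ∃ t ∈ (S : Subgroup (Matrix.SpecialLinearGroup (Fin 2) (GaloisField p n))),
            ∃ u : Fin 2 → GaloisField p n,
              w = Matrix.mulVec (t : Matrix (Fin 2) (Fin 2) (GaloisField p n)) u - u} :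
          Set (Fin 2 → GaloisField p n)) ∧
    (AddSubgroup.closure {w : Fin 2 → GaloisField p n |
        ∃ t ∈ (S : Subgroup (Matrix.SpecialLinearGroup (Fin 2) (GaloisField p n))),
          ∃ u : Fin 2 → GaloisField p n,
            w = Matrix.mulVec (t : Matrix (Fin 2) (Fin 2) (GaloisField p n)) u - u} :
        Set (Fin 2 → GaloisField p n))
      = (AddSubgroup.closure {w : Fin 2 → GaloisField p n |
          ∃ t ∈ Subgroup.zpowers s, ∃ u : Fin 2 → GaloisField p n,
            w = Matrix.mulVec (t : Matrix (Fin 2) (Fin 2) (GaloisField p n)) u - u} :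
          Set (Fin 2 → GaloisField p n)) ∧
    (AddSubgroup.closure {w : Fin 2 → GaloisField p n |
        ∃ t ∈ Subgroup.zpowers s, ∃ u : Fin 2 → GaloisField p n,
          w = Matrix.mulVec (t : Matrix (Fin 2) (Fin 2) (GaloisField p n)) u - u} :
        Set (Fin 2 → GaloisField p n))
      = {w : Fin 2 → GaloisField p n |
          ∃ g ∈ (S : Subgroup (Matrix.SpecialLinearGroup (Fin 2) (GaloisField p n))),
            w = Matrix.mulVec (g : Matrix (Fin 2) (Fin 2) (GaloisField p n)) v - v} :=
  sl2_natural_module_centralizers_general p n S s hs hs1 v hv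
end

section
/- Let p be a prime and Q a semi-extraspecial finite p-group with |Q : Z(Q)| = p^{2n}. Then for every maximal subgroup Z of Z(Q) and every subgroup A with Z ≤ A ≤ Q such that A/Z is abelian, one has |A/Z| ≤ p^{1+n}. Consequently, every abelian subgroup A of Q satisfies |A| ≤ |Z(Q)|·p^n. -/
/-- A finite `p`-group `E` is extraspecial if `Z(E) = [E,E] = Φ(E)` and `|Z(E)| = p`. -/
def IsExtraspecial (p : ℕ) (E : Type*) [Group E] : Prop :=
  Subgroup.center E = commutator E ∧ commutator E = frattini E ∧
    Nat.card (Subgroup.center E) = p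

/-- A finite `p`-group `Q` is semi-extraspecial if `Φ(Q) = [Q,Q] = Z(Q)` and `Q/Z` is
extraspecial for every maximal subgroup `Z` of `Z(Q)`. -/
def IsSemiExtraspecial (p : ℕ) (Q : Type*) [Group Q] : Prop :=
  frattini Q = commutator Q ∧ commutator Q = Subgroup.center Q ∧
  ∀ (Z : Subgroup Q) [Z.Normal], Z < Subgroup.center Q →
    (∀ Z' : Subgroup Q, Z < Z' → Z' ≤ Subgroup.center Q → Z' = Subgroup.center Q) →
    IsExtraspecial p (Q ⧸ Z)

open scoped commutatorElement

/-!
Everything happens in the extraspecial quotient `E = Q ⧸ Z`: there `Z(E)` is the image of `Z(Q)`,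
of order `p`, so `|E : Z(E)| = |Q : Z(Q)| = p ^ (2 * n)`. For an abelian `B ≥ Z(E)` choose `S`
generating `E` modulo the centralizer `C` of `B`, with `p ^ |S| ≤ |E : C|` (possible in any
`p`-group). Two elements `b, b'` of `B` with `⁅s, b⁆ = ⁅s, b'⁆` for all `s ∈ S` differ by an
element commuting with `S` and `C`, hence by a central one; since commutators lie in `Z(E)`,
`|B : Z(E)| ≤ p ^ |S| ≤ |E : B|`. The two indices multiply to `p ^ (2 * n)`, so
`|B : Z(E)| ≤ p ^ n`. For abelian `A ≤ Q`, apply this to `A ⊔ Z` with `Z` any maximal subgroup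
of `Z(Q)`, which has index `p` there.
-/

open Subgroup

section

variable {G : Type*} [Group G]

theorem Subgroup.normal_of_le_center {Z : Subgroup G} (h : Z ≤ center G) : Z.Normal :=
  ⟨fun z hz g => by rwa [mem_center_iff.mp (h hz) g, mul_inv_cancel_right]⟩

theorem commute_of_commutatorElement_eq {g a b : G} (h : ⁅g, a⁆ = ⁅g, b⁆) :
    Commute g (a⁻¹ * b) := by
  refine Commute.inv_left_iff.mp ?_
  calc g⁻¹ * (a⁻¹ * b) = a⁻¹ * (g⁻¹ * ⁅g, a⁆) * b := by
        simp only [commutatorElement_def]; group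
    _ = a⁻¹ * (g⁻¹ * ⁅g, b⁆) * b := by rw [h]
    _ = a⁻¹ * b * g⁻¹ := by simp only [commutatorElement_def]; group

theorem Subgroup.mem_center_of_sup_closure_eq_top {H : Subgroup G} {S : Set G}
    (hHS : H ⊔ closure S = ⊤) {w : G} (hH : ∀ h ∈ H, Commute h w) (hS : ∀ s ∈ S, Commute s w) :
    w ∈ center G := by
  have hle : H ⊔ closure S ≤ centralizer {w} :=
    sup_le (fun h hh => mem_centralizer_singleton_iff.mpr (hH h hh))
      ((closure_le _).mpr fun s hs => mem_centralizer_singleton_iff.mpr (hS s hs))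
  rw [hHS] at hle
  exact mem_center_iff.mpr fun g => mem_centralizer_singleton_iff.mp (hle (mem_top g))

theorem Subgroup.card_eq_card_mul_relIndex {H K : Subgroup G} (h : H ≤ K) :
    Nat.card K = Nat.card H * H.relIndex K := by
  rw [← relIndex_bot_left, ← relIndex_bot_left, relIndex_mul_relIndex _ _ _ bot_le h]

theorem Subgroup.isMulCommutative_sup_of_le_center (A N : Subgroup G) [IsMulCommutative A]
    (hN : N ≤ center G) : IsMulCommutative ↥(A ⊔ N) := by
  rw [← le_centralizer_iff_isMulCommutative]
  refine sup_le ?_ (hN.trans (center_le_centralizer _))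
  rw [le_centralizer_iff]
  exact sup_le (le_centralizer A) (hN.trans (center_le_centralizer _))

end

namespace IsPGroup

variable {p : ℕ} {G : Type*} [Group G] [Finite G]

theorem mul_index_le_index_of_lt (hG : IsPGroup p G) (hp : p.Prime) {H K : Subgroup G}
    (hHK : H < K) : p * K.index ≤ H.index := by
  have := Fact.mk hp
  rw [← relIndex_mul_index hHK.le]
  refine Nat.mul_le_mul_right _ ?_
  obtain ⟨k, hk⟩ := (hG.to_subgroup K).exists_card_eq
  obtain ⟨j, -, hj⟩ := (Nat.dvd_prime_pow hp).mp (hk ▸ relIndex_dvd_card H K)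
  have hj0 : j ≠ 0 := by
    rintro rfl
    exact hHK.not_ge (relIndex_eq_one.mp (by simpa using hj))
  rw [hj]
  exact le_self_pow₀ hp.one_lt.le hj0

theorem exists_finset_sup_closure_eq_top (hG : IsPGroup p G) (hp : p.Prime) (H : Subgroup G) :
    ∃ S : Finset G, H ⊔ closure (S : Set G) = ⊤ ∧ p ^ S.card ≤ H.index := by
  classical
  induction H using WellFoundedGT.induction with
  | _ H ih =>
  by_cases htop : H = ⊤
  · exact ⟨∅, by simp [htop], by simp [htop]⟩
  obtain ⟨x, -, hx⟩ := SetLike.exists_of_lt (lt_top_iff_ne_top.mpr htop)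
  set H' := H ⊔ closure {x}
  have hlt : H < H' := SetLike.lt_iff_le_and_exists.mpr
    ⟨le_sup_left, x, mem_sup_right (subset_closure rfl), hx⟩
  obtain ⟨S, hS, hcard⟩ := ih H' hlt
  refine ⟨insert x S, ?_, ?_⟩
  · rwa [Finset.coe_insert, Set.insert_eq, Subgroup.closure_union, ← sup_assoc]
  · calc p ^ (insert x S).card ≤ p ^ (S.card + 1) :=
          Nat.pow_le_pow_right hp.pos (Finset.card_insert_le x S)
      _ = p * p ^ S.card := by ring
      _ ≤ p * H'.index := Nat.mul_le_mul_left p hcard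
      _ ≤ H.index := hG.mul_index_le_index_of_lt hp hlt

end IsPGroup

section

variable {p : ℕ} {G : Type*} [Group G] [Finite G]

theorem relIndex_center_le_index_of_isMulCommutative (hp : p.Prime) (hG : IsPGroup p G)
    (hcomm : commutator G ≤ center G) (hZ : Nat.card (center G) ≤ p)
    (B : Subgroup G) [IsMulCommutative B] : (center G).relIndex B ≤ B.index := by
  obtain ⟨S, hS, hcard⟩ := hG.exists_finset_sup_closure_eq_top hp (centralizer (B : Set G))
  let f : B ⧸ (center G).subgroupOf B → (S → center G) := fun q s =>
    ⟨⁅(s : G), (q.out : G)⁆, hcomm (commutator_mem_commutator (mem_top _) (mem_top _))⟩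
  have hf : Function.Injective f := by
    intro q₁ q₂ h
    rw [← QuotientGroup.out_eq' q₁, ← QuotientGroup.out_eq' q₂, QuotientGroup.eq, mem_subgroupOf]
    refine mem_center_of_sup_closure_eq_top hS (fun c hc => ?_) (fun s hs => ?_)
    · exact (mem_centralizer_iff.mp hc _ (q₁.out⁻¹ * q₂.out).2).symm
    · exact commute_of_commutatorElement_eq (congrArg Subtype.val (congrFun h ⟨s, hs⟩))
  calc (center G).relIndex B ≤ Nat.card (S → center G) := Nat.card_le_card_of_injective f hf
    _ = Nat.card (center G) ^ S.card := by simp [Nat.card_fun]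
    _ ≤ p ^ S.card := Nat.pow_le_pow_left hZ _
    _ ≤ (centralizer (B : Set G)).index := hcard
    _ ≤ B.index := index_antitone (le_centralizer B)

theorem card_le_pow_of_isMulCommutative (hp : p.Prime) (hG : IsPGroup p G)
    (hcomm : commutator G ≤ center G) (hZ : Nat.card (center G) ≤ p) {n : ℕ}
    (hindex : (center G).index = p ^ (2 * n)) (B : Subgroup G) [IsMulCommutative B] :
    Nat.card B ≤ p ^ (1 + n) := by
  set B' := B ⊔ center G
  have := isMulCommutative_sup_of_le_center B (center G) le_rfl
  have hZB' : center G ≤ B' := le_sup_right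
  set r := (center G).relIndex B'
  have hr : r ≤ p ^ n := by
    have hsq : r * B'.index = p ^ n * p ^ n := by
      rw [relIndex_mul_index hZB', hindex, two_mul, pow_add]
    refine Nat.mul_self_le_mul_self_iff.mp (hsq ▸ Nat.mul_le_mul_left r ?_)
    exact relIndex_center_le_index_of_isMulCommutative hp hG hcomm hZ B'
  calc Nat.card B ≤ Nat.card B' := card_le_of_le le_sup_left
    _ = Nat.card (center G) * r := card_eq_card_mul_relIndex hZB'
    _ ≤ p * p ^ n := Nat.mul_le_mul hZ hr
    _ = p ^ (1 + n) := by ring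

end

section

variable {p : ℕ} {Q : Type*} [Group Q] {Z : Subgroup Q} [Z.Normal]

theorem map_center_le_center_quotient :
    (center Q).map (QuotientGroup.mk' Z) ≤ center (Q ⧸ Z) := by
  rintro _ ⟨z, hz, rfl⟩
  refine mem_center_iff.mpr fun g => QuotientGroup.induction_on g fun g => ?_
  simp only [QuotientGroup.mk'_apply, ← QuotientGroup.mk_mul, mem_center_iff.mp hz g]

theorem isMulCommutative_map_mk' {A : Subgroup Q} (hA : ∀ a ∈ A, ∀ b ∈ A, ⁅a, b⁆ ∈ Z) :
    IsMulCommutative (A.map (QuotientGroup.mk' Z)) := by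
  rw [← le_centralizer_iff_isMulCommutative]
  rintro _ ⟨a, ha, rfl⟩
  refine mem_centralizer_iff.mpr ?_
  rintro _ ⟨b, hb, rfl⟩
  rw [← commutatorElement_eq_one_iff_mul_comm, ← map_commutatorElement, QuotientGroup.mk'_apply,
    QuotientGroup.eq_one_iff]
  exact hA b hb a ha

theorem relIndex_center_eq_of_card_center_quotient (hp : p.Prime) (hZ : Z < center Q)
    (hcard : Nat.card (center (Q ⧸ Z)) = p) : Z.relIndex (center Q) = p := by
  have hdvd : Z.relIndex (center Q) ∣ p := by
    rw [← QuotientGroup.ker_mk' Z, relIndex_ker, ← hcard]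
    exact card_dvd_of_le map_center_le_center_quotient
  exact (hp.eq_one_or_self_of_dvd _ hdvd).resolve_left (relIndex_eq_one.not.mpr hZ.not_ge)

variable [Finite Q]

theorem map_center_eq_center_quotient (hp : p.Prime) (hZ : Z < center Q)
    (hcard : Nat.card (center (Q ⧸ Z)) = p) :
    (center Q).map (QuotientGroup.mk' Z) = center (Q ⧸ Z) := by
  refine eq_of_le_of_card_ge map_center_le_center_quotient ?_
  rw [hcard, ← relIndex_ker, QuotientGroup.ker_mk',
    relIndex_center_eq_of_card_center_quotient hp hZ hcard]

theorem relIndex_le_of_isExtraspecial_quotient (hp : p.Prime) (hQ : IsPGroup p Q)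
    (hZ : Z < center Q) (hE : IsExtraspecial p (Q ⧸ Z)) {n : ℕ}
    (hindex : (center Q).index = p ^ (2 * n)) (A : Subgroup Q)
    (hA : ∀ a ∈ A, ∀ b ∈ A, ⁅a, b⁆ ∈ Z) : Z.relIndex A ≤ p ^ (1 + n) := by
  obtain ⟨hcenter, -, hcard⟩ := hE
  have := isMulCommutative_map_mk' hA
  have hindexE : (center (Q ⧸ Z)).index = p ^ (2 * n) := by
    rw [← map_center_eq_center_quotient hp hZ hcard,
      index_map_eq _ (QuotientGroup.mk'_surjective Z) (by rw [QuotientGroup.ker_mk']; exact hZ.le),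
      hindex]
  rw [← QuotientGroup.ker_mk' Z, relIndex_ker]
  exact card_le_pow_of_isMulCommutative hp (hQ.to_quotient Z) hcenter.ge hcard.le hindexE _

end

theorem card_le_of_isSemiExtraspecial {p : ℕ} {Q : Type*} [Group Q] [Finite Q] (hp : p.Prime)
    (hQ : IsPGroup p Q) (hsemi : IsSemiExtraspecial p Q) {n : ℕ}
    (hindex : (center Q).index = p ^ (2 * n)) (A : Subgroup Q) [IsMulCommutative A] :
    Nat.card A ≤ Nat.card (center Q) * p ^ n := by
  have := Fact.mk hp
  rcases subsingleton_or_nontrivial Q with _ | _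
  · calc Nat.card A ≤ 1 := Finite.card_le_one_iff_subsingleton.mpr inferInstance
      _ ≤ Nat.card (center Q) * p ^ n := Nat.mul_pos Nat.card_pos (pow_pos hp.pos n)
  have hbot : ⊥ < center Q :=
    bot_lt_iff_ne_bot.mpr ((nontrivial_iff_ne_bot _).mp hQ.center_nontrivial)
  obtain ⟨Z, -, hZ⟩ := exists_le_covBy_of_lt hbot
  have := normal_of_le_center hZ.le
  have hE := hsemi.2.2 Z hZ.lt fun Z' hZZ' hZ' => hZ'.eq_of_not_lt (hZ.2 hZZ')
  have := isMulCommutative_sup_of_le_center A Z hZ.le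
  have hA : ∀ a ∈ A ⊔ Z, ∀ b ∈ A ⊔ Z, ⁅a, b⁆ ∈ Z := fun a ha b hb => by
    rw [commutatorElement_eq_one_iff_mul_comm.mpr (setLike_mul_comm ha hb)]
    exact one_mem Z
  calc Nat.card A ≤ Nat.card ↥(A ⊔ Z) := card_le_of_le le_sup_left
    _ = Nat.card Z * Z.relIndex (A ⊔ Z) := card_eq_card_mul_relIndex le_sup_right
    _ ≤ Nat.card Z * p ^ (1 + n) := Nat.mul_le_mul_left _
        (relIndex_le_of_isExtraspecial_quotient hp hQ hZ.lt hE hindex _ hA)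
    _ = Nat.card (center Q) * p ^ n := by
      rw [card_eq_card_mul_relIndex hZ.le,
        relIndex_center_eq_of_card_center_quotient hp hZ.lt hE.2.2]
      ring

/-- Let `Q` be a semi-extraspecial finite `p`-group with `|Q : Z(Q)| = p ^ (2n)`. Then for
every maximal subgroup `Z` of `Z(Q)` and every subgroup `A` with `Z ≤ A ≤ Q` such that
`A/Z` is abelian, one has `|A/Z| ≤ p ^ (1 + n)`; consequently, every abelian subgroup `A`
of `Q` satisfies `|A| ≤ |Z(Q)| * p ^ n`. -/
theorem semiExtraspecial_abelian_bound (p : ℕ) (hp : p.Prime) (Q : Type*) [Group Q] [Finite Q]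
    (hQ : IsPGroup p Q) (hsemi : IsSemiExtraspecial p Q) (n : ℕ)
    (hindex : (Subgroup.center Q).index = p ^ (2 * n)) :
    (∀ Z : Subgroup Q, Z < Subgroup.center Q →
      (∀ Z' : Subgroup Q, Z < Z' → Z' ≤ Subgroup.center Q → Z' = Subgroup.center Q) →
      ∀ A : Subgroup Q, Z ≤ A → (∀ a ∈ A, ∀ b ∈ A, ⁅a, b⁆ ∈ Z) →
        Z.relIndex A ≤ p ^ (1 + n)) ∧
    (∀ A : Subgroup Q, (∀ a ∈ A, ∀ b ∈ A, a * b = b * a) →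
      Nat.card A ≤ Nat.card (Subgroup.center Q) * p ^ n) := by
  refine ⟨fun Z hZ hZmax A _ hA => ?_, fun A hA => ?_⟩
  · have := normal_of_le_center hZ.le
    exact relIndex_le_of_isExtraspecial_quotient hp hQ hZ (hsemi.2.2 Z hZ hZmax) hindex A hA
  · have : IsMulCommutative A := le_centralizer_iff_isMulCommutative.mp
      fun a ha => mem_centralizer_iff.mpr fun b hb => hA b hb a ha
    exact card_le_of_isSemiExtraspecial hp hQ hsemi hindex A
end
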